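/- arXiv:1208.3443 — 4 statements merged into one kernel-verified Lean document; each statement's English description precedes it below -/
import Mathlib

section
/- Let p_i(z) = (N-K)! (z+1)_N / (z+i)_{N-K+1} for i = 1, ..., K, where (y)_m denotes the Pochhammer symbol y(y+1)...(y+m-1) and 1 ≤ K < N. Then each p_i is a polynomial in z of degree K-1, and p_i(-j) = 0 whenever i > j for 1 ≤ i, j ≤ K, while p_i(-i) = (-1)^{i-1}(i-1)!(N-i)!. -/
open Polynomial

private lemma asc_comp (a : ℝ) (n : ℕ) :
    (ascPochhammer ℝ n).comp (X + C a) = ∏ m ∈ Finset.range n, (X + C (a + m)) := by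
  induction n with
  | zero => simp
  | succ n ih =>
    rw [ascPochhammer_succ_right, mul_comp, ih, Finset.prod_range_succ]
    congr 1
    simp only [add_comp, X_comp, natCast_comp]
    rw [add_assoc, ← C_eq_natCast, ← C_add]

private lemma L1 (n : ℕ) :
    ∏ m ∈ Finset.Ico 1 (n + 1), ((m : ℝ) - (n + 1)) = (-1) ^ n * n.factorial := by
  rw [Finset.prod_Ico_eq_prod_range]
  simp only [Nat.add_sub_cancel]
  rw [← Finset.prod_range_reflect]
  have h1 : ∀ k ∈ Finset.range n, ((1 + (n - 1 - k) : ℕ) : ℝ) - (↑n + 1) =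
      (-1 : ℝ) * ((k : ℕ) + 1 : ℝ) := by
    intro k hk
    rw [Finset.mem_range] at hk
    have : 1 + (n - 1 - k) = n - k := by omega
    rw [this, Nat.cast_sub hk.le]
    ring
  calc (∏ k ∈ Finset.range n, (((1 + (n - 1 - k) : ℕ) : ℝ) - (↑n + 1)))
      = ∏ k ∈ Finset.range n, ((-1 : ℝ) * ((k : ℕ) + 1 : ℝ)) := Finset.prod_congr rfl h1
    _ = (-1) ^ n * ∏ k ∈ Finset.range n, (((k : ℕ) + 1 : ℝ)) := by
        rw [Finset.prod_mul_distrib, Finset.prod_const, Finset.card_range]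
    _ = (-1) ^ n * n.factorial := by
        congr 1
        exact_mod_cast congrArg (fun x : ℕ => (x : ℝ)) (Finset.prod_range_add_one_eq_factorial n)

private lemma L2 (a d : ℕ) :
    a.factorial * ∏ m ∈ Finset.range d, (a + 1 + m) = (a + d).factorial := by
  induction d with
  | zero => simp
  | succ d ih =>
    rw [Finset.prod_range_succ, ← mul_assoc, ih, ← add_assoc, Nat.factorial_succ]
    ring

/-- **Properties of the polynomials `p_i(z) = (N-K)!(z+1)_N/(z+i)_{N-K+1}`.**
Since `(z+i)_{N-K+1}` divides `(z+1)_N`, `p_i` is characterized by the polynomial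
identity `p_i(z)·(z+i)_{N-K+1} = (N-K)!·(z+1)_N`.  Each `p_i` has degree `K-1`,
vanishes at `z = -j` whenever `1 ≤ j < i ≤ K`, and `p_i(-i) = (-1)^{i-1}(i-1)!(N-i)!`. -/
theorem p_i_properties (N K i : ℕ) (hK : 1 ≤ K) (hKN : K < N) (hi1 : 1 ≤ i) (hiK : i ≤ K)
    (p : Polynomial ℝ)
    (hp : p * ((ascPochhammer ℝ (N - K + 1)).comp (X + C (i : ℝ))) =
        C ((N - K).factorial : ℝ) * ((ascPochhammer ℝ N).comp (X + 1))) :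
    p.natDegree = K - 1 ∧
      (∀ j : ℕ, 1 ≤ j → j ≤ K → j < i → p.eval (-(j : ℝ)) = 0) ∧
      p.eval (-(i : ℝ)) =
        (-1) ^ (i - 1) * ((i - 1).factorial : ℝ) * ((N - i).factorial : ℝ) := by
  have hD : (ascPochhammer ℝ (N - K + 1)).comp (X + C (i : ℝ)) =
      ∏ m ∈ Finset.Ico i (i + (N - K) + 1), (X + C (m : ℝ)) := by
    rw [asc_comp, Finset.prod_Ico_eq_prod_range]
    have h : i + (N - K) + 1 - i = N - K + 1 := by omega
    rw [h]
    exact Finset.prod_congr rfl fun m _ => by push_cast; ring_nf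
  have hR : (ascPochhammer ℝ N).comp (X + 1) =
      ∏ m ∈ Finset.Ico 1 (N + 1), (X + C (m : ℝ)) := by
    have h1 : (X + 1 : ℝ[X]) = X + C (1 : ℝ) := by simp
    rw [h1, asc_comp, Finset.prod_Ico_eq_prod_range]
    simp only [Nat.add_sub_cancel]
    exact Finset.prod_congr rfl fun m _ => by push_cast; ring_nf
  set A := ∏ m ∈ Finset.Ico 1 i, (X + C (m : ℝ)) with hA
  set B := ∏ m ∈ Finset.Ico (i + (N - K) + 1) (N + 1), (X + C (m : ℝ)) with hB
  set D := ∏ m ∈ Finset.Ico i (i + (N - K) + 1), (X + C (m : ℝ)) with hDdef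
  have hsplit : A * D * B = ∏ m ∈ Finset.Ico 1 (N + 1), (X + C (m : ℝ)) := by
    rw [hA, hDdef, hB, Finset.prod_Ico_consecutive _ (by omega) (by omega),
        Finset.prod_Ico_consecutive _ (by omega) (by omega)]
  have hDmonic : D.Monic := monic_prod_of_monic (Finset.Ico i (i + (N - K) + 1))
    (fun m : ℕ => X + C (m : ℝ)) (fun m _ => monic_X_add_C _)
  have hpq : p = C ((N - K).factorial : ℝ) * A * B := by
    apply mul_right_cancel₀ hDmonic.ne_zero
    rw [hD, hR] at hp
    rw [hp, ← hsplit]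
    ring
  have hc : ((N - K).factorial : ℝ) ≠ 0 := Nat.cast_ne_zero.mpr (N - K).factorial_ne_zero
  have hAdeg : A.natDegree = i - 1 := by
    have h := natDegree_prod (Finset.Ico 1 i) (fun m : ℕ => X + C (m : ℝ))
      (fun m _ => (monic_X_add_C ((m : ℝ))).ne_zero)
    rw [hA, h]
    simp only [natDegree_X_add_C, Finset.sum_const, Nat.card_Ico, smul_eq_mul, mul_one]
  have hBdeg : B.natDegree = K - i := by
    have h := natDegree_prod (Finset.Ico (i + (N - K) + 1) (N + 1)) (fun m : ℕ => X + C (m : ℝ))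
      (fun m _ => (monic_X_add_C ((m : ℝ))).ne_zero)
    rw [hB, h]
    simp only [natDegree_X_add_C, Finset.sum_const, Nat.card_Ico, smul_eq_mul, mul_one]
    omega
  have hAne : A ≠ 0 := (monic_prod_of_monic (Finset.Ico 1 i)
    (fun m : ℕ => X + C (m : ℝ)) (fun m _ => monic_X_add_C _)).ne_zero
  have hBne : B ≠ 0 := (monic_prod_of_monic (Finset.Ico (i + (N - K) + 1) (N + 1))
    (fun m : ℕ => X + C (m : ℝ)) (fun m _ => monic_X_add_C _)).ne_zero
  refine ⟨?_, ?_, ?_⟩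
  · rw [hpq, natDegree_mul (mul_ne_zero (by simpa using hc) hAne) hBne,
      natDegree_mul (by simpa using hc) hAne, natDegree_C, hAdeg, hBdeg]
    omega
  · intro j hj1 hjK hji
    rw [hpq]
    simp only [eval_mul, eval_C, hA, eval_prod, eval_add, eval_X, eval_C]
    have : ∏ m ∈ Finset.Ico 1 i, (-(j : ℝ) + (m : ℝ)) = 0 := by
      apply Finset.prod_eq_zero (Finset.mem_Ico.mpr ⟨hj1, hji⟩)
      simp
    rw [this]; ring
  · rw [hpq]
    simp only [eval_mul, eval_C, hA, hB, eval_prod, eval_add, eval_X, eval_C]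
    have hA' : ∏ m ∈ Finset.Ico 1 i, (-(i : ℝ) + (m : ℝ)) =
        (-1) ^ (i - 1) * (i - 1).factorial := by
      obtain ⟨n, rfl⟩ : ∃ n, i = n + 1 := ⟨i - 1, by omega⟩
      have := L1 n
      simp only [Nat.add_sub_cancel]
      rw [← this]
      apply Finset.prod_congr rfl
      intro m _
      push_cast
      ring
    have hB' : ((N - K).factorial : ℝ) *
        ∏ m ∈ Finset.Ico (i + (N - K) + 1) (N + 1), (-(i : ℝ) + (m : ℝ)) =
        (N - i).factorial := by
      rw [Finset.prod_Ico_eq_prod_range]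
      have hcard : N + 1 - (i + (N - K) + 1) = K - i := by omega
      rw [hcard]
      have hterm : ∀ k ∈ Finset.range (K - i),
          (-(i : ℝ) + ((i + (N - K) + 1 + k : ℕ) : ℝ)) = ((N - K + 1 + k : ℕ) : ℝ) := by
        intro k _
        push_cast
        ring
      rw [Finset.prod_congr rfl hterm, ← Nat.cast_prod, ← Nat.cast_mul]
      have := L2 (N - K) (K - i)
      have harg : N - K + (K - i) = N - i := by omega
      rw [harg] at this
      rw [show (∏ k ∈ Finset.range (K - i), ((N - K + 1 + k : ℕ)) : ℕ) =
        ∏ m ∈ Finset.range (K - i), (N - K + 1 + m) from rfl, this]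
    calc ((N - K).factorial : ℝ) * (∏ m ∈ Finset.Ico 1 i, (-(i : ℝ) + (m : ℝ))) *
          ∏ m ∈ Finset.Ico (i + (N - K) + 1) (N + 1), (-(i : ℝ) + (m : ℝ))
        = (∏ m ∈ Finset.Ico 1 i, (-(i : ℝ) + (m : ℝ))) *
          (((N - K).factorial : ℝ) *
            ∏ m ∈ Finset.Ico (i + (N - K) + 1) (N + 1), (-(i : ℝ) + (m : ℝ))) := by ring
      _ = (-1) ^ (i - 1) * ((i - 1).factorial : ℝ) * ((N - i).factorial : ℝ) := by
          rw [hA', hB']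
end

section
/- For the specific polynomials p_i(z) = (N-K)!(z+1)_N/(z+i)_{N-K+1}, i = 1,...,K (with 1 ≤ K < N), the determinant det[p_i(z_j)]_{i,j=1}^K equals (-1)^{K(K-1)/2} (N-1)!(N-2)!...(N-K)! · ∏_{1≤i<j≤K}(z_i - z_j). -/
open Finset Polynomial

noncomputable def Pr (n : ℕ) (y : ℝ) : ℝ := ∏ k ∈ Finset.range n, (y + k)

lemma Pr_cast (n : ℕ) (x : ℝ) : (ascPochhammer ℝ n).eval x = Pr n x := by
  induction n with
  | zero => simp [Pr]
  | succ n ih => rw [ascPochhammer_succ_eval, ih, Pr, Pr, Finset.prod_range_succ]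

lemma Pr_succ (n : ℕ) (y : ℝ) : Pr (n + 1) y = Pr n y * (y + n) :=
  Finset.prod_range_succ _ _

lemma Pr_succ' (n : ℕ) (y : ℝ) : Pr (n + 1) y = y * Pr n (y + 1) := by
  simp only [Pr, Finset.prod_range_succ', Nat.cast_zero, add_zero, Nat.cast_add, Nat.cast_one]
  rw [mul_comm]
  congr 1
  exact Finset.prod_congr rfl fun k _ => by ring

lemma Pr_add (m n : ℕ) (y : ℝ) : Pr (m + n) y = Pr m y * Pr n (y + m) := by
  rw [Pr, Finset.prod_range_add]
  congr 1
  exact Finset.prod_congr rfl fun k _ => by push_cast; ring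

noncomputable def Fp (a K m i : ℕ) : Polynomial ℝ :=
  C ((-1) ^ m * ((a + m).factorial : ℝ)) * ((ascPochhammer ℝ i).comp (X + 1)) *
    ((ascPochhammer ℝ (K - 1 - m - i)).comp (X + C ((a + m + i + 2 : ℕ) : ℝ)))

lemma Fp_eval (a K m i : ℕ) (x : ℝ) :
    (Fp a K m i).eval x =
      (-1) ^ m * ((a + m).factorial : ℝ) * Pr i (x + 1) *
        Pr (K - 1 - m - i) (x + ((a : ℝ) + m + i + 2)) := by
  simp only [Fp, eval_mul, eval_C, eval_comp, eval_add, eval_X, eval_one, Pr_cast]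
  push_cast
  ring_nf

lemma Fp_char (a K i : ℕ) (hi : i < K) :
    Fp a K 0 i * ((ascPochhammer ℝ (a + 1)).comp (X + C ((i + 1 : ℕ) : ℝ))) =
      C ((a.factorial : ℝ)) * ((ascPochhammer ℝ (K + a)).comp (X + 1)) := by
  apply Polynomial.funext
  intro x
  simp only [eval_mul, eval_C, Fp_eval, eval_comp, eval_add, eval_X, eval_one, Pr_cast,
    Nat.cast_zero, add_zero, Nat.sub_zero, pow_zero, one_mul, Nat.add_zero,
    Nat.cast_add, Nat.cast_one]
  have hsplit : K + a = i + ((a + 1) + (K - 1 - i)) := by omega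
  rw [hsplit, Pr_add i, Pr_add (a + 1)]
  rw [show x + 1 + (i : ℝ) = x + ((i : ℝ) + 1) by ring]
  rw [show x + ((i : ℝ) + 1) + (((a : ℕ) + 1 : ℕ) : ℝ) = x + ((a : ℝ) + i + 2) by push_cast; ring]
  ring

lemma Fp_rec (a K m i : ℕ) (h : m + i + 2 ≤ K) :
    Fp a K (m + 1) i = Fp a K m (i + 1) - Fp a K m i := by
  apply Polynomial.funext
  intro x
  obtain ⟨d, hd⟩ : ∃ d, K = m + i + 2 + d := ⟨K - (m + i + 2), by omega⟩
  subst hd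
  simp only [eval_sub, Fp_eval, Nat.cast_add, Nat.cast_one]
  have h1 : m + i + 2 + d - 1 - (m + 1) - i = d := by omega
  have h2 : m + i + 2 + d - 1 - m - (i + 1) = d := by omega
  have h3 : m + i + 2 + d - 1 - m - i = d + 1 := by omega
  rw [h1, h2, h3, Pr_succ, Pr_succ']
  rw [show x + ((a : ℝ) + m + i + 2) + 1 = x + ((a : ℝ) + ((m : ℝ) + 1) + i + 2) by ring]
  rw [show x + ((a : ℝ) + m + ((i : ℝ) + 1) + 2) = x + ((a : ℝ) + ((m : ℝ) + 1) + i + 2) by ring]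
  rw [show a + (m + 1) = (a + m) + 1 from rfl]
  push_cast [Nat.factorial_succ]
  ring

lemma prod_Ioi_rev {K : ℕ} (g : Fin K → Fin K → ℝ) :
    (∏ i : Fin K, ∏ j ∈ Finset.Ioi i, g i j) =
      ∏ i : Fin K, ∏ j ∈ Finset.Ioi i, g j.rev i.rev := by
  rw [Finset.prod_sigma', Finset.prod_sigma']
  refine Finset.prod_nbij' (fun x => ⟨x.2.rev, x.1.rev⟩) (fun x => ⟨x.2.rev, x.1.rev⟩)
    ?_ ?_ ?_ ?_ ?_ <;>
      simp [Fin.rev_lt_rev, Fin.rev_rev]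


/-- **Generalized Vandermonde determinant for the specific polynomials
`p_i(z) = (N-K)!(z+1)_N/(z+i)_{N-K+1}`, `i = 1, …, K` (`1 ≤ K < N`).**
Each `p_i` is characterized by `p_i(z)·(z+i)_{N-K+1} = (N-K)!·(z+1)_N`, and
`det[p_i(z_j)]_{i,j=1}^K = (-1)^{K(K-1)/2} (N-1)!(N-2)!⋯(N-K)! ∏_{i<j}(z_i - z_j)`. -/
theorem det_p_i_eval (N K : ℕ) (hK : 1 ≤ K) (hKN : K < N) (p : Fin K → Polynomial ℝ)
    (hp : ∀ i : Fin K,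
        p i * ((ascPochhammer ℝ (N - K + 1)).comp (X + C ((i : ℕ) + 1 : ℝ))) =
          C ((N - K).factorial : ℝ) * ((ascPochhammer ℝ N).comp (X + 1)))
    (z : Fin K → ℝ) :
    Matrix.det (Matrix.of fun i j : Fin K => (p i).eval (z j)) =
      (-1) ^ (K * (K - 1) / 2) *
        (∏ r ∈ Finset.range K, ((N - 1 - r).factorial : ℝ)) *
        ∏ i : Fin K, ∏ j ∈ Finset.Ioi i, (z i - z j) := by
  obtain ⟨a, rfl⟩ : ∃ a, N = K + a := ⟨N - K, by omega⟩
  have ha : 1 ≤ a := by omega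
  -- Step 1: identify p with the explicit polynomials
  have hp' : ∀ i : Fin K, p i = Fp a K 0 (i : ℕ) := by
    intro i
    have hne : ((ascPochhammer ℝ (a + 1)).comp (X + C (((i : ℕ) : ℝ) + 1))) ≠ 0 :=
      ((monic_ascPochhammer ℝ (a + 1)).comp_X_add_C _).ne_zero
    apply mul_right_cancel₀ hne
    have h1 := hp i
    rw [show K + a - K = a by omega] at h1
    have h2 := Fp_char a K (i : ℕ) i.isLt
    simp only [Nat.cast_add, Nat.cast_one] at h2
    exact h1.trans h2.symm
  -- Step 2: iterated forward differences
  have hiter : ∀ m i : ℕ, m + i < K →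
      (fwdDiff 1)^[m] (fun j => Fp a K 0 j) i = Fp a K m i := by
    intro m
    induction m with
    | zero => intro i _; simp
    | succ m ih =>
      intro i hi
      rw [Function.iterate_succ_apply']
      show ((fwdDiff 1)^[m] (fun j => Fp a K 0 j)) (i + 1) -
          ((fwdDiff 1)^[m] (fun j => Fp a K 0 j)) i = _
      rw [ih (i + 1) (by omega), ih i (by omega), Fp_rec a K m i (by omega)]
  -- Step 3: each difference polynomial as combination of the p i
  have hQ : ∀ m : Fin K, Fp a K (m : ℕ) 0 =
      ∑ j : Fin K, ((-1 : ℤ) ^ ((m : ℕ) - (j : ℕ)) * ((m : ℕ).choose (j : ℕ))) • p j := by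
    intro m
    have h0 := fwdDiff_iter_eq_sum_shift 1 (fun j => Fp a K 0 j) (m : ℕ) 0
    rw [hiter (m : ℕ) 0 (by omega)] at h0
    simp only [smul_eq_mul, mul_one, zero_add] at h0
    rw [h0]
    have hsub : Finset.range ((m : ℕ) + 1) ⊆ Finset.range K :=
      Finset.range_subset_range.mpr (by omega)
    rw [Finset.sum_subset hsub (fun k _ hk => by
      have hmk : (m : ℕ) < k := by
        by_contra hc
        exact hk (Finset.mem_range.mpr (by omega))
      simp [Nat.choose_eq_zero_of_lt hmk])]
    rw [← Fin.sum_univ_eq_sum_range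
      (fun k => ((-1 : ℤ) ^ ((m : ℕ) - k) * ((m : ℕ).choose k)) • Fp a K 0 k) K]
    exact Finset.sum_congr rfl fun j _ => by rw [hp' j]
  -- Step 4: matrix manipulations
  set M : Matrix (Fin K) (Fin K) ℝ := Matrix.of fun i j => (p i).eval (z j) with hM
  set L : Matrix (Fin K) (Fin K) ℝ := Matrix.of
    (fun m j : Fin K =>
      (((-1 : ℤ) ^ ((m : ℕ) - (j : ℕ)) * ((m : ℕ).choose (j : ℕ)) : ℤ) : ℝ)) with hL
  set Q : Matrix (Fin K) (Fin K) ℝ :=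
    Matrix.of fun m j => (Fp a K (m : ℕ) 0).eval (z j) with hQm
  have hLM : Q = L * M := by
    ext m j
    rw [hQm, Matrix.of_apply, hQ m, Polynomial.eval_finset_sum, Matrix.mul_apply]
    refine Finset.sum_congr rfl fun j' _ => ?_
    rw [zsmul_eq_mul, Polynomial.eval_mul, Polynomial.eval_intCast]
    simp [hL, hM]
  have hdetL : L.det = 1 := by
    have ht : L.BlockTriangular OrderDual.toDual := by
      intro i j hij
      have hij' : (i : ℕ) < (j : ℕ) := hij
      simp [hL, Nat.choose_eq_zero_of_lt hij']
    rw [Matrix.det_of_lowerTriangular L ht]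
    simp [hL]
  -- Step 5: factor out the constants
  set S : Fin K → Polynomial ℝ := fun m =>
    (ascPochhammer ℝ (K - 1 - (m : ℕ))).comp (X + C ((a + (m : ℕ) + 2 : ℕ) : ℝ)) with hS
  have hF0 : ∀ m : Fin K, Fp a K (m : ℕ) 0 =
      C ((-1 : ℝ) ^ (m : ℕ) * ((a + (m : ℕ)).factorial : ℝ)) * S m := by
    intro m
    simp [Fp, hS]
  set A : Matrix (Fin K) (Fin K) ℝ := Matrix.of fun m j => (S m).eval (z j) with hA
  have hdetQ : Q.det =
      (∏ m : Fin K, ((-1 : ℝ) ^ (m : ℕ) * ((a + (m : ℕ)).factorial : ℝ))) * A.det := by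
    have hQA : Q = Matrix.of fun m j : Fin K =>
        ((-1 : ℝ) ^ (m : ℕ) * ((a + (m : ℕ)).factorial : ℝ)) * A m j := by
      ext m j
      rw [hQm, Matrix.of_apply, hF0 m]
      simp [hA]
    rw [hQA]
    exact Matrix.det_mul_column _ _
  -- Step 6: the Vandermonde part
  have hdeg : ∀ jj : Fin K, (S jj.rev).natDegree = (jj : ℕ) := by
    intro jj
    rw [hS]
    rw [natDegree_comp, ascPochhammer_natDegree, natDegree_X_add_C, Fin.val_rev]
    omega
  have hmonic : ∀ jj : Fin K, (S jj.rev).Monic :=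
    fun jj => (monic_ascPochhammer ℝ _).comp_X_add_C _
  have hdetA : A.det = ∏ i : Fin K, ∏ j ∈ Finset.Ioi i, (z i - z j) := by
    have h3 : (Matrix.of fun i j : Fin K => (S (Fin.rev j)).eval (z (Fin.rev i))).det
        = (Matrix.vandermonde fun ii : Fin K => z ii.rev).det :=
      (Matrix.det_eval_matrixOfPolynomials_eq_det_vandermonde
        (fun ii : Fin K => z ii.rev) (fun jj => S jj.rev) hdeg hmonic).symm
    calc A.det = (A.submatrix Fin.revPerm Fin.revPerm).det :=
          (Matrix.det_submatrix_equiv_self Fin.revPerm A).symm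
      _ = (Matrix.transpose (Matrix.of fun i j : Fin K =>
              (S (Fin.rev j)).eval (z (Fin.rev i)))).det := rfl
      _ = (Matrix.of fun i j : Fin K => (S (Fin.rev j)).eval (z (Fin.rev i))).det :=
          Matrix.det_transpose _
      _ = (Matrix.vandermonde fun ii : Fin K => z ii.rev).det := h3
      _ = ∏ i : Fin K, ∏ j ∈ Finset.Ioi i, (z (Fin.rev j) - z (Fin.rev i)) :=
          Matrix.det_vandermonde _
      _ = ∏ i : Fin K, ∏ j ∈ Finset.Ioi i, (z i - z j) :=
          (prod_Ioi_rev fun i j => z i - z j).symm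
  -- Final assembly
  have goalEq : Matrix.det (Matrix.of fun i j : Fin K => (p i).eval (z j)) = M.det := rfl
  have hMQ : M.det = Q.det := by rw [hLM, Matrix.det_mul, hdetL, one_mul]
  rw [goalEq, hMQ, hdetQ, hdetA]
  congr 1
  rw [Finset.prod_mul_distrib]
  congr 1
  · rw [Finset.prod_pow_eq_pow_sum]
    congr 1
    rw [Fin.sum_univ_eq_sum_range (fun m => m) K, Finset.sum_range_id]
  · rw [Fin.prod_univ_eq_prod_range (fun m => (((a + m).factorial : ℕ) : ℝ)) K,
      ← Finset.prod_range_reflect (fun r => (((K + a) - 1 - r).factorial : ℝ)) K]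
    refine Finset.prod_congr rfl fun r hr => ?_
    have hrK : r < K := Finset.mem_range.mp hr
    congr 2
    omega
end

section
/- Vanishing property: fix 1 ≤ K < N and ν ∈ GT_N. Define ψ_i(x | K) = ∑_{j=1}^N 1_{ν_j - j ≥ x} · ((ν_j - j - x + 1)_{N-K-1}/(N-K-1)!) · [V(ν_1-1, ..., ν_N - N)^{-1}]_{ij}, where V denotes the Vandermonde matrix with the given nodes and (y)_m is the Pochhammer symbol. Then for every integer x ≤ ν_N - K - 1: ψ_i(x | K) = 0 for i = 1, ..., K, and ψ_{K+1}(x | K) = 1/(N-K-1)!. -/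
open Finset Polynomial

/-- The Vandermonde matrix with nodes `ν_1 - 1 > ν_2 - 2 > … > ν_N - N`. -/
noncomputable def nuVandermonde (N : ℕ) (ν : Fin N → ℤ) : Matrix (Fin N) (Fin N) ℝ :=
  Matrix.of fun i j : Fin N => ((ν i - ((i : ℕ) + 1) : ℤ) : ℝ) ^ (N - 1 - (j : ℕ))

/-- `ψ_i(x | K) = ∑_{j=1}^N 1_{ν_j - j ≥ x} ((ν_j - j - x + 1)_{N-K-1}/(N-K-1)!)
· [V(ν_1-1, …, ν_N-N)⁻¹]_{ij}`, where `(y)_m` is the Pochhammer symbol. -/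
noncomputable def psiFun (N K : ℕ) (ν : Fin N → ℤ) (x : ℤ) (i : Fin N) : ℝ :=
  ∑ j : Fin N,
    (if x ≤ ν j - ((j : ℕ) + 1) then
        ((ascPochhammer ℝ (N - K - 1)).eval (((ν j - ((j : ℕ) + 1) - x + 1 : ℤ) : ℝ))) /
          ((N - K - 1).factorial : ℝ)
      else 0) * (nuVandermonde N ν)⁻¹ i j

lemma ascPochhammer_eval_eq_prod_real (m : ℕ) (y : ℝ) :
    (ascPochhammer ℝ m).eval y = ∏ k ∈ range m, (y + k) := by
  induction m with
  | zero => simp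
  | succ n ih => rw [ascPochhammer_succ_eval, ih, Finset.prod_range_succ]

lemma ascPochhammer_eval_int_zero (m : ℕ) (y : ℤ) (h1 : 1 - (m:ℤ) ≤ y) (h2 : y ≤ 0) :
    (ascPochhammer ℝ m).eval (y : ℝ) = 0 := by
  rw [ascPochhammer_eval_eq_prod_real]
  apply Finset.prod_eq_zero (i := (-y).toNat)
  · simp only [Finset.mem_range]; omega
  · have : ((-y).toNat : ℝ) = (-y : ℤ) := by exact_mod_cast Int.toNat_of_nonneg (by omega)
    rw [this]; push_cast; ring

lemma nuVandermonde_det_ne_zero (N : ℕ) (ν : Fin N → ℤ) (hν : Antitone ν) :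
    (nuVandermonde N ν).det ≠ 0 := by
  set a : Fin N → ℝ := fun j => ((ν j - ((j : ℕ) + 1) : ℤ) : ℝ) with ha
  have hne : ∀ p q : Fin N, p ≠ q → a p ≠ a q := by
    have key : ∀ p q : Fin N, p < q → a q < a p := by
      intro p q h
      have h1 : ν q ≤ ν p := hν h.le
      have h2 : (p:ℕ) < (q:ℕ) := h
      simp only [ha, Int.cast_sub]
      have : (ν q - ((q:ℕ)+1) : ℤ) < (ν p - ((p:ℕ)+1) : ℤ) := by omega
      exact_mod_cast this
    intro p q hpq
    rcases lt_or_gt_of_ne hpq with h | h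
    · exact (key p q h).ne'
    · exact (key q p h).ne
  have hV : nuVandermonde N ν = (Matrix.vandermonde a).submatrix id Fin.rev := by
    ext i j
    simp [nuVandermonde, Matrix.vandermonde, Matrix.submatrix, Fin.rev, ha]
    congr 1
    omega
  rw [hV]
  have : (Matrix.vandermonde a).submatrix id ⇑Fin.revPerm =
      (Matrix.vandermonde a).submatrix id Fin.rev := rfl
  rw [← this]
  rw [Matrix.det_permute' Fin.revPerm (Matrix.vandermonde a)]
  rw [Matrix.det_vandermonde]
  refine mul_ne_zero ?_ ?_
  · rcases Int.units_eq_one_or (Equiv.Perm.sign (Fin.revPerm : Equiv.Perm (Fin N))) with h | h <;>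
      simp [h]
  · apply Finset.prod_ne_zero_iff.mpr
    intro i _
    apply Finset.prod_ne_zero_iff.mpr
    intro j hj
    rw [Finset.mem_Ioi] at hj
    exact sub_ne_zero_of_ne (hne j i (ne_of_gt hj))

/-- **Vanishing property.**
For `1 ≤ K < N`, `ν ∈ GT_N`, and any integer `x ≤ ν_N - K - 1`:
`ψ_i(x | K) = 0` for `i = 1, …, K`, and `ψ_{K+1}(x | K) = 1/(N-K-1)!`. -/
theorem psi_vanishing (N K : ℕ) (hK : 1 ≤ K) (hKN : K < N)
    (ν : Fin N → ℤ) (hν : Antitone ν) (hN : 0 < N)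
    (x : ℤ) (hx : x ≤ ν ⟨N - 1, by omega⟩ - K - 1) :
    ∀ i : Fin N,
      ((i : ℕ) < K → psiFun N K ν x i = 0) ∧
      ((i : ℕ) = K → psiFun N K ν x i = 1 / ((N - K - 1).factorial : ℝ)) := by
  intro i
  set m : ℕ := N - K - 1 with hm
  set a : Fin N → ℝ := fun j => ((ν j - ((j : ℕ) + 1) : ℤ) : ℝ) with ha
  set V := nuVandermonde N ν with hVdef
  have hdet : IsUnit V.det := isUnit_iff_ne_zero.mpr (nuVandermonde_det_ne_zero N ν hν)
  set Q : ℝ[X] := (ascPochhammer ℝ m).comp (X + C (1 - (x:ℝ))) with hQ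
  have hmonic : Q.Monic := (monic_ascPochhammer ℝ m).comp_X_add_C _
  have hdeg : Q.natDegree = m := by
    rw [hQ, natDegree_comp, ascPochhammer_natDegree, natDegree_X_add_C, mul_one]
  have hdegN : Q.natDegree < N := by rw [hdeg]; omega
  have hQeval : ∀ j : Fin N, Q.eval (a j) =
      (ascPochhammer ℝ m).eval (((ν j - ((j:ℕ)+1) - x + 1 : ℤ) : ℝ)) := by
    intro j
    rw [hQ, eval_comp]
    congr 1
    simp only [eval_add, eval_X, eval_C, ha]
    push_cast
    ring
  -- drop the indicator
  have hdrop : ∀ j : Fin N,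
      (if x ≤ ν j - ((j:ℕ)+1) then
        ((ascPochhammer ℝ m).eval (((ν j - ((j:ℕ)+1) - x + 1 : ℤ) : ℝ))) / (m.factorial : ℝ)
      else 0) = Q.eval (a j) / (m.factorial : ℝ) := by
    intro j
    rw [hQeval]
    split
    · rfl
    · rename_i h
      have hjle : ν ⟨N - 1, by omega⟩ ≤ ν j := by
        apply hν
        have hj := j.isLt
        exact Fin.le_def.mpr (show (j:ℕ) ≤ N - 1 by omega)
      push_neg at h
      have h2 : ((j:ℕ):ℤ) + 1 ≤ (N:ℤ) := by exact_mod_cast j.isLt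
      have hmz : (m:ℤ) = (N:ℤ) - K - 1 := by omega
      have hub : ν j - ((j:ℕ)+1) - x + 1 ≤ 0 := by omega
      have hlb : 1 - (m:ℤ) ≤ ν j - ((j:ℕ)+1) - x + 1 := by omega
      rw [ascPochhammer_eval_int_zero m _ hlb hub]
      simp
  -- coefficient vector
  set v : Fin N → ℝ := fun l => Q.coeff (N - 1 - (l:ℕ)) with hv
  have hmul : V.mulVec v = fun j => Q.eval (a j) := by
    funext j
    show ∑ l : Fin N, V j l * v l = _
    have step : ∀ l : Fin N, V j l * v l =
        (fun k : Fin N => Q.coeff (k:ℕ) * a j ^ (k:ℕ)) (Fin.rev l) := by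
      intro l
      simp only [hVdef, nuVandermonde, Matrix.of_apply, hv, Fin.val_rev, ha]
      rw [show N - 1 - (l:ℕ) = N - ((l:ℕ) + 1) from by omega]
      ring
    simp_rw [step]
    have hre : ∑ l : Fin N, Q.coeff ((Fin.rev l : Fin N):ℕ) * a j ^ ((Fin.rev l : Fin N):ℕ)
        = ∑ k : Fin N, Q.coeff (k:ℕ) * a j ^ (k:ℕ) :=
      Fintype.sum_equiv (Fin.revPerm : Equiv.Perm (Fin N)) _ _ (fun l => rfl)
    rw [hre, Fin.sum_univ_eq_sum_range (fun k => Q.coeff k * a j ^ k) N]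
    exact (eval_eq_sum_range' hdegN (a j)).symm
  have key : (∑ j : Fin N, V⁻¹ i j * Q.eval (a j)) = v i := by
    calc (∑ j : Fin N, V⁻¹ i j * Q.eval (a j))
        = V⁻¹.mulVec (V.mulVec v) i := by
          rw [hmul]; simp [Matrix.mulVec, dotProduct]
      _ = v i := by
          rw [Matrix.mulVec_mulVec, Matrix.nonsing_inv_mul V hdet, Matrix.one_mulVec]
  have hpsi : psiFun N K ν x i = v i / (m.factorial : ℝ) := by
    unfold psiFun
    rw [← hm, ← hVdef, ← key, Finset.sum_div]
    apply Finset.sum_congr rfl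
    intro j _
    rw [hdrop j]
    ring
  constructor
  · intro hiK
    rw [hpsi]
    have : Q.coeff (N - 1 - (i:ℕ)) = 0 :=
      coeff_eq_zero_of_natDegree_lt (by rw [hdeg]; omega)
    simp [hv, this]
  · intro hiK
    rw [hpsi]
    have h1 : N - 1 - (i:ℕ) = Q.natDegree := by rw [hdeg]; omega
    have : v i = 1 := by rw [hv]; simp only [h1]; exact hmonic.coeff_natDegree
    rw [this]
end

section
/- q-vanishing property: fix 0 < q < 1, a subset J = {j_1, ..., j_ℓ} ⊂ {0, ..., N-1} with ℓ < N, and ν ∈ GT_N. Define ψ^J_i(x) = ∑_{j=1}^N h_{ν_j - j - x}(q^{j_1}, ..., q^{j_ℓ}) · [V(q^{ν_N - N}, ..., q^{ν_1 - 1})^{-1}]_{ij}, where h_m is the complete homogeneous symmetric polynomial (zero for m < 0) and V is the Vandermonde matrix with the indicated nodes. Then for any i = 1, ..., N and any integer x ≤ ν_N - N + ℓ - 1: ψ^J_i(x) = 0 if N - i ∉ J, and ψ^J_i(x) = q^{-x(N-i)} ∏_{r ∈ J, r ≠ N-i} (1 - q^{r - N + i})^{-1} if N - i ∈ J. -/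
open Finset

/-- The complete homogeneous symmetric polynomial `h_m` of degree `m` in the
variables `a : α → ℝ`. -/
noncomputable def hcomplete {α : Type*} [Fintype α] [DecidableEq α] (m : ℕ) (a : α → ℝ) : ℝ :=
  ∑ s : Sym α m, ((s : Multiset α).map a).prod

/-- `h_d` with an integer degree: zero for `d < 0`. -/
noncomputable def hcompleteInt {α : Type*} [Fintype α] [DecidableEq α] (d : ℤ) (a : α → ℝ) : ℝ :=
  if d < 0 then 0 else hcomplete d.toNat a

/-- The Vandermonde matrix with the distinct nodes `q^{ν_j - j}`, `j = 1, …, N`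
(for `0 < q < 1` these are distinct positive reals). -/
noncomputable def qNuVandermonde (N : ℕ) (ν : Fin N → ℤ) (q : ℝ) : Matrix (Fin N) (Fin N) ℝ :=
  Matrix.of fun i j : Fin N => (q ^ (ν i - ((i : ℕ) + 1) : ℤ)) ^ (N - 1 - (j : ℕ))

/-- `ψ^J_i(x) = ∑_{j=1}^N h_{ν_j - j - x}(q^{j_1},…,q^{j_ℓ}) · [V⁻¹]_{ij}`, where `h_m`
is the complete homogeneous symmetric polynomial (zero for `m < 0`). -/
noncomputable def qPsiFun (N : ℕ) (ν : Fin N → ℤ) (q : ℝ) (J : Finset ℕ) (x : ℤ)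
    (i : Fin N) : ℝ :=
  ∑ j : Fin N,
    hcompleteInt (ν j - ((j : ℕ) + 1) - x) (fun r : {r // r ∈ J} => q ^ (r : ℕ)) *
      (qNuVandermonde N ν q)⁻¹ i j

/-!
With `T s = q^{-xs} ∏_{r ∈ J, r ≠ s} (1 - q^{r-s})⁻¹` for `s ∈ J` and `T s = 0` otherwise, the
Vandermonde matrix maps the coefficient vector of the polynomial `∑ T s w^s` (of degree `< N`
since `J ⊆ {0, …, N-1}`) to its values at the nodes `q^{ν_j - j}`, and these values are the
`h_{ν_j - j - x}(q^J)`. Indeed, for distinct `a_r` and `n ≥ 0`, the partial-fraction identity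
`h_{n+1-ℓ}(a) = ∑_{s ∈ J} a_s^n / ∏_{r ≠ s} (a_s - a_r)` holds: both sides satisfy
`F(J ∪ {t}, n+1) = a_t F(J ∪ {t}, n) + F(J, n)`, and at `n = 0` the right side is the
`w^{ℓ-1}`-coefficient of the Lagrange interpolant of `1`. The bound on `x` is exactly what makes
`n = ν_j - j - x + ℓ - 1` nonnegative for every `j`.
-/

section Complete

variable {α β : Type*} [Fintype α] [DecidableEq α] [Fintype β] [DecidableEq β]

lemma hcomplete_zero (a : α → ℝ) : hcomplete 0 a = 1 := by
  simp [hcomplete, Sym.eq_nil_of_card_zero]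

lemma hcomplete_succ_of_isEmpty [IsEmpty α] (a : α → ℝ) (n : ℕ) : hcomplete (n + 1) a = 0 :=
  Finset.sum_of_isEmpty _

lemma hcomplete_comp_equiv (e : α ≃ β) (a : β → ℝ) (n : ℕ) :
    hcomplete n (a ∘ e) = hcomplete n a := by
  refine Fintype.sum_equiv (Sym.equivCongr e) _ _ fun s => ?_
  simp [Sym.equivCongr, Sym.coe_map, Multiset.map_map]

lemma hcomplete_option_succ (a : Option α → ℝ) (n : ℕ) :
    hcomplete (n + 1) a = a none * hcomplete n a + hcomplete (n + 1) (a ∘ some) := by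
  rw [hcomplete, ← (symOptionSuccEquiv (α := α) (n := n)).symm.sum_comp,
    Fintype.sum_sum_type, hcomplete, Finset.mul_sum, hcomplete]
  congr 1
  · refine Finset.sum_congr rfl fun s _ => ?_
    simp [symOptionSuccEquiv, SymOptionSuccEquiv.decode, Sym.coe_cons]
  · refine Finset.sum_congr rfl fun s _ => ?_
    simp [symOptionSuccEquiv, SymOptionSuccEquiv.decode, Multiset.map_map]

lemma hcompleteInt_of_isEmpty [IsEmpty α] (a : α → ℝ) {d : ℤ} (hd : 0 < d) :
    hcompleteInt d a = 0 := by
  rw [hcompleteInt, if_neg (by omega), show d.toNat = (d - 1).toNat + 1 by omega,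
    hcomplete_succ_of_isEmpty]

lemma hcompleteInt_comp_equiv (e : α ≃ β) (a : β → ℝ) (d : ℤ) :
    hcompleteInt d (a ∘ e) = hcompleteInt d a := by
  simp only [hcompleteInt, hcomplete_comp_equiv]

lemma hcompleteInt_option (a : Option α → ℝ) (d : ℤ) :
    hcompleteInt d a = a none * hcompleteInt (d - 1) a + hcompleteInt d (a ∘ some) := by
  rcases lt_trichotomy d 0 with hd | rfl | hd
  · simp [hcompleteInt, hd, show d - 1 < 0 by omega]
  · simp [hcompleteInt, hcomplete_zero]
  · simp only [hcompleteInt, if_neg (show ¬d < 0 by omega), if_neg (show ¬d - 1 < 0 by omega),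
      show d.toNat = (d - 1).toNat + 1 by omega, hcomplete_option_succ]

end Complete

section DividedDifference

variable {K ι : Type*} [Field K] [DecidableEq ι] {a : ι → K}

lemma sum_inv_prod_sub_eq_ite {s : Finset ι} (ha : Set.InjOn a s) :
    ∑ i ∈ s, (∏ j ∈ s.erase i, (a i - a j))⁻¹ = if #s = 1 then 1 else 0 := by
  rcases s.eq_empty_or_nonempty with rfl | hs
  · simp
  have hcoeff := Lagrange.coeff_eq_sum ha (P := 1)
    (by rw [Polynomial.degree_one]; exact_mod_cast hs.card_pos)
  simp only [Polynomial.coeff_one, Polynomial.eval_one, one_div] at hcoeff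
  rw [← hcoeff]
  exact if_congr (by have := hs.card_pos; omega) rfl rfl

lemma sum_pow_succ_div_prod_sub_insert {t : ι} {S : Finset ι} (ht : t ∉ S)
    (ha : ∀ i ∈ S, a i ≠ a t) (n : ℕ) :
    ∑ i ∈ insert t S, a i ^ (n + 1) / ∏ j ∈ (insert t S).erase i, (a i - a j) =
      a t * ∑ i ∈ insert t S, a i ^ n / ∏ j ∈ (insert t S).erase i, (a i - a j) +
        ∑ i ∈ S, a i ^ n / ∏ j ∈ S.erase i, (a i - a j) := by
  rw [Finset.sum_insert ht, Finset.sum_insert ht, mul_add, Finset.mul_sum, add_assoc,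
    ← Finset.sum_add_distrib, pow_succ', mul_div_assoc]
  congr 1
  refine Finset.sum_congr rfl fun i hi => ?_
  have hit : a i - a t ≠ 0 := sub_ne_zero.mpr (ha i hi)
  rw [Finset.erase_insert_of_ne (ne_of_mem_of_not_mem hi ht).symm,
    Finset.prod_insert fun h => ht (Finset.mem_of_mem_erase h), ← div_div, ← div_div,
    ← mul_div_assoc, ← add_div]
  congr 1
  field_simp
  ring

end DividedDifference

section FinsetNodes

variable {ι : Type*} [DecidableEq ι]

lemma hcompleteInt_insert (a : ι → ℝ) {t : ι} {S : Finset ι} (ht : t ∉ S) (d : ℤ) :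
    hcompleteInt d (fun i : ↥(insert t S) => a i) =
      a t * hcompleteInt (d - 1) (fun i : ↥(insert t S) => a i) +
        hcompleteInt d (fun i : S => a i) := by
  set g : Option S → ℝ := fun o => o.elim (a t) fun i => a i
  have hg : (fun i : ↥(insert t S) => a i) = g ∘ Finset.subtypeInsertEquivOption ht := by
    funext i
    by_cases hi : (i : ι) = t <;> simp [g, Finset.subtypeInsertEquivOption, hi]
  rw [hg, hcompleteInt_comp_equiv, hcompleteInt_comp_equiv, hcompleteInt_option]
  rfl

lemma hcompleteInt_one_sub_card (a : ι → ℝ) (s : Finset ι) :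
    hcompleteInt (1 - #s) (fun i : s => a i) = if #s = 1 then 1 else 0 := by
  rcases Nat.lt_trichotomy #s 1 with hs | hs | hs
  · have : IsEmpty s := by
      rw [Finset.card_eq_zero.mp (show #s = 0 by omega)]
      infer_instance
    rw [if_neg (by omega), hcompleteInt_of_isEmpty _ (by omega)]
  · simp [hcompleteInt, hs, hcomplete_zero]
  · simp [hcompleteInt, show (1 : ℤ) - #s < 0 by omega, hs.ne']

theorem hcompleteInt_eq_sum_pow_div_prod_sub {a : ι → ℝ} (n : ℕ) {s : Finset ι}
    (ha : Set.InjOn a s) :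
    hcompleteInt ((n : ℤ) + 1 - #s) (fun i : s => a i) =
      ∑ i ∈ s, a i ^ n / ∏ j ∈ s.erase i, (a i - a j) := by
  induction n generalizing s with
  | zero =>
    simpa [zero_add, pow_zero, one_div] using
      (hcompleteInt_one_sub_card a s).trans (sum_inv_prod_sub_eq_ite ha).symm
  | succ n ih =>
    rcases s.eq_empty_or_nonempty with rfl | hs
    · exact hcompleteInt_of_isEmpty _ (by rw [Finset.card_empty]; omega)
    obtain ⟨S, t, ht, rfl⟩ := hs.exists_cons_eq
    rw [Finset.cons_eq_insert] at ha ⊢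
    have hat : ∀ i ∈ S, a i ≠ a t := fun i hi =>
      ha.ne (Finset.mem_insert_of_mem hi) (Finset.mem_insert_self t S)
        (ne_of_mem_of_not_mem hi ht)
    rw [sum_pow_succ_div_prod_sub_insert ht hat, hcompleteInt_insert a ht, ← ih ha,
      ← ih (ha.mono (by simp)), Finset.card_insert_of_notMem ht]
    push_cast
    ring_nf

end FinsetNodes

lemma hcompleteInt_qpow_eq_sum {q : ℝ} (hq : 0 < q) (hq1 : q ≠ 1) (J : Finset ℕ) {m : ℤ}
    (hm : 1 ≤ m + #J) :
    hcompleteInt m (fun r : J => q ^ (r : ℕ)) =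
      ∑ s ∈ J, q ^ ((s : ℤ) * m) * ∏ r ∈ J.erase s, (1 - q ^ ((r : ℤ) - s))⁻¹ := by
  obtain ⟨n, rfl⟩ : ∃ n : ℕ, (n : ℤ) + 1 - #J = m := ⟨(m + #J - 1).toNat, by omega⟩
  rw [hcompleteInt_eq_sum_pow_div_prod_sub n (pow_right_injective₀ hq hq1).injOn]
  refine Finset.sum_congr rfl fun s hs => ?_
  have hfactor : ∀ r : ℕ, q ^ s - q ^ r = q ^ s * (1 - q ^ ((r : ℤ) - s)) := fun r => by
    rw [mul_sub, mul_one, ← zpow_natCast, ← zpow_add₀ hq.ne', add_sub_cancel, zpow_natCast,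
      zpow_natCast]
  have hcard : 1 ≤ #J := Finset.card_pos.mpr ⟨s, hs⟩
  rw [Finset.prod_congr rfl fun r _ => hfactor r, Finset.prod_mul_distrib, Finset.prod_const,
    Finset.card_erase_of_mem hs, Finset.prod_inv_distrib, ← div_div, div_eq_mul_inv _ (∏ _ ∈ _, _),
    ← pow_mul, ← pow_mul, ← zpow_natCast, ← zpow_natCast, ← zpow_sub₀ hq.ne']
  congr 2
  push_cast [Nat.cast_sub hcard]
  ring

section Vandermonde

open Matrix

variable {N : ℕ} {ν : Fin N → ℤ} {q : ℝ}

lemma qNuVandermonde_det_ne_zero (hq : 0 < q) (hq1 : q ≠ 1) (hν : Antitone ν) :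
    (qNuVandermonde N ν q).det ≠ 0 := by
  have hexp : StrictAnti fun k : Fin N => ν k - ((k : ℕ) + 1) := fun k l hkl => by
    have := hν hkl.le
    dsimp only
    have : (k : ℕ) < l := hkl
    omega
  have hnodes : Function.Injective fun k : Fin N => q ^ (ν k - ((k : ℕ) + 1)) :=
    (zpow_right_injective₀ hq hq1).comp hexp.injective
  have hrev : (qNuVandermonde N ν q).submatrix id Fin.revPerm =
      vandermonde fun k : Fin N => q ^ (ν k - ((k : ℕ) + 1)) := by
    ext k j
    simp only [submatrix_apply, id_eq, qNuVandermonde, of_apply,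
      vandermonde_apply, Fin.revPerm_apply, Fin.val_rev]
    congr 1
    omega
  have hvdm := det_vandermonde_ne_zero_iff.mpr hnodes
  rw [← hrev, det_permute'] at hvdm
  exact right_ne_zero_of_mul hvdm

lemma qNuVandermonde_mulVec_rev (c : ℕ → ℝ) :
    (qNuVandermonde N ν q *ᵥ fun j => c (N - 1 - j)) =
      fun k => ∑ s ∈ range N, (q ^ (ν k - ((k : ℕ) + 1))) ^ s * c s := by
  funext k
  rw [mulVec, dotProduct,
    ← Fin.sum_univ_eq_sum_range (fun s => (q ^ (ν k - ((k : ℕ) + 1))) ^ s * c s),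
    ← Equiv.sum_comp Fin.revPerm]
  refine Finset.sum_congr rfl fun j _ => ?_
  simp only [qNuVandermonde, of_apply, Fin.revPerm_apply, Fin.val_rev]
  congr 2 <;> omega

theorem sum_qNuVandermonde_inv_mul_eval (hdet : (qNuVandermonde N ν q).det ≠ 0) (c : ℕ → ℝ)
    (i : Fin N) :
    ∑ j, (qNuVandermonde N ν q)⁻¹ i j * ∑ s ∈ range N, (q ^ (ν j - ((j : ℕ) + 1))) ^ s * c s =
      c (N - 1 - i) := by
  change ((qNuVandermonde N ν q)⁻¹ *ᵥ fun j => _) i = _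
  rw [← qNuVandermonde_mulVec_rev, mulVec_mulVec,
    nonsing_inv_mul _ (isUnit_iff_ne_zero.mpr hdet), one_mulVec]

end Vandermonde

noncomputable def qPsiValue (q : ℝ) (J : Finset ℕ) (x : ℤ) (s : ℕ) : ℝ :=
  if s ∈ J then q ^ (-(x * s)) * ∏ r ∈ J.erase s, (1 - q ^ ((r : ℤ) - s))⁻¹ else 0

lemma sum_pow_mul_qPsiValue {N : ℕ} {q : ℝ} (hq : 0 < q) (hq1 : q ≠ 1) {J : Finset ℕ}
    (hJ : J ⊆ range N) {e x : ℤ} (he : 1 ≤ e - x + #J) :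
    ∑ s ∈ range N, (q ^ e) ^ s * qPsiValue q J x s =
      hcompleteInt (e - x) (fun r : J => q ^ (r : ℕ)) := by
  rw [hcompleteInt_qpow_eq_sum hq hq1 J he]
  simp only [qPsiValue, mul_ite, mul_zero]
  rw [Finset.sum_ite_mem, Finset.inter_eq_right.mpr hJ]
  refine Finset.sum_congr rfl fun s _ => ?_
  rw [← mul_assoc, ← zpow_natCast, ← zpow_mul, ← zpow_add₀ hq.ne']
  congr 2
  ring

/-- **q-vanishing property.**
Fix `0 < q < 1`, `J = {j_1, …, j_ℓ} ⊆ {0, …, N-1}` with `ℓ < N`, and `ν ∈ GT_N`.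
Then for any `i = 1, …, N` and any integer `x ≤ ν_N - N + ℓ - 1`:
`ψ^J_i(x) = 0` if `N - i ∉ J`, and
`ψ^J_i(x) = q^{-x(N-i)} ∏_{r ∈ J, r ≠ N-i} (1 - q^{r-N+i})⁻¹` if `N - i ∈ J`. -/
theorem qPsi_vanishing (N : ℕ) (hN : 0 < N) (q : ℝ) (hq : 0 < q) (hq1 : q < 1)
    (J : Finset ℕ) (hJ : J ⊆ Finset.range N)
    (ν : Fin N → ℤ) (hν : Antitone ν)
    (x : ℤ) (hx : x ≤ ν ⟨N - 1, by omega⟩ - N + J.card - 1) (i : Fin N) :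
    (N - 1 - (i : ℕ) ∉ J → qPsiFun N ν q J x i = 0) ∧
    (N - 1 - (i : ℕ) ∈ J →
      qPsiFun N ν q J x i =
        q ^ (-(x * (N - 1 - (i : ℕ) : ℤ))) *
          ∏ r ∈ J.erase (N - 1 - (i : ℕ)),
            (1 - q ^ ((r : ℤ) - (N - 1 - (i : ℕ) : ℤ)))⁻¹) := by
  have hψ : qPsiFun N ν q J x i = qPsiValue q J x (N - 1 - i) := by
    rw [qPsiFun, ← sum_qNuVandermonde_inv_mul_eval (qNuVandermonde_det_ne_zero hq hq1.ne hν)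
      (qPsiValue q J x) i]
    refine Finset.sum_congr rfl fun j _ => ?_
    have hνj := hν (show j ≤ ⟨N - 1, by omega⟩ from Fin.mk_le_mk.mpr (by omega))
    rw [mul_comm, sum_pow_mul_qPsiValue hq hq1.ne hJ (by omega)]
  have hcast : ((N - 1 - i : ℕ) : ℤ) = N - 1 - i := by omega
  exact ⟨fun h => by rw [hψ, qPsiValue, if_neg h],
    fun h => by rw [hψ, qPsiValue, if_pos h, hcast]⟩
end
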